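/- arXiv:1403.7793 — 9 statements merged into one kernel-verified Lean document; each statement's English description precedes it below -/
import Mathlib

section
/- For every feasible quadruple (d1, d2, r, L) of the pressure vessel design problem, f(d1,d2,r,L) ≥ f(0.8125, 0.4375, R*, L*), where R* = 0.8125/0.0193 and L* = 1296000/(π·R*²) − (4/3)·R*. That is, x* = (0.8125, 0.4375, R*, L*) is a global minimizer of the pressure vessel design problem. -/
/-!
A feasible radius exceeds `40`, since otherwise the volume is out of reach with `L ≤ 200`; so the
thickness bounds and the grid force `d₂ ≥ 7/16` and `d₁ ≥ m/16` with `m = ⌈0.3088 r⌉ ≥ 13`.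
For fixed thicknesses the objective grows with `L`, so `L` may be lowered to the shortest length
meeting the volume constraint. For `r ≤ R*` (that is `m = 13`) the resulting function of `r` is
decreasing and equals `f(x*)` at `R*`. For `14 ≤ m ≤ 19` it stays above `6060 > f(x*)` on the
whole range `m - 1 ≤ 0.3088 r ≤ m`, and for `m ≥ 20` the thickness constraints alone with
`L ≥ 10` give more than `6060`.
-/

/-- The pressure vessel design problem objective. -/
noncomputable def pvObj (d1 d2 r L : ℝ) : ℝ :=
  0.6224 * d1 * r * L + 1.7781 * d2 * r ^ 2 + 3.1661 * d1 ^ 2 * L + 19.84 * d1 ^ 2 * r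

/-- Feasibility for the pressure vessel design problem. -/
def pvFeasible (d1 d2 r L : ℝ) : Prop :=
  (∃ I J : ℤ, 1 ≤ I ∧ I ≤ 99 ∧ 1 ≤ J ∧ J ≤ 99 ∧
      d1 = (I : ℝ) * 0.0625 ∧ d2 = (J : ℝ) * 0.0625) ∧
  10 ≤ r ∧ r ≤ 200 ∧ 10 ≤ L ∧ L ≤ 200 ∧
  0.0193 * r ≤ d1 ∧ 0.00954 * r ≤ d2 ∧
  Real.pi * r ^ 2 * L + (4 * Real.pi / 3) * r ^ 3 ≥ 1296000 ∧ L ≤ 240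

open Real

/-- The length at which a vessel of radius `r` has volume exactly `1296000`, with `π`
replaced by `p` so that rational bounds on `π` can be substituted. -/
noncomputable def pvMinLength (p r : ℝ) : ℝ := 1296000 / (p * r ^ 2) - 4 / 3 * r

theorem pvMinLength_le_of_volume {r L : ℝ} (hr : 0 < r)
    (hvol : π * r ^ 2 * L + 4 * π / 3 * r ^ 3 ≥ 1296000) : pvMinLength π r ≤ L := by
  have : 0 < π * r ^ 2 := by positivity
  rw [pvMinLength, sub_le_iff_le_add, div_le_iff₀ this]
  linarith

theorem pvMinLength_anti {p q r : ℝ} (hp : 0 < p) (hpq : p ≤ q) (hr : 0 < r) :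
    pvMinLength q r ≤ pvMinLength p r := by
  unfold pvMinLength
  gcongr

theorem forty_lt_of_volume {r L : ℝ} (hr : 0 ≤ r) (hL : L ≤ 200)
    (hvol : π * r ^ 2 * L + 4 * π / 3 * r ^ 3 ≥ 1296000) : 40 < r := by
  by_contra! h
  have : r ^ 2 * L + 4 / 3 * r ^ 3 ≤ 40 ^ 2 * 200 + 4 / 3 * 40 ^ 3 := by
    have : r ^ 2 * 200 + 4 / 3 * r ^ 3 ≤ 40 ^ 2 * 200 + 4 / 3 * 40 ^ 3 := by gcongr
    nlinarith [mul_le_mul_of_nonneg_left hL (sq_nonneg r)]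
  nlinarith [pi_lt_d4, pi_pos]

theorem mul_le_of_sub_one_mul_lt {s d : ℝ} (hs : 0 < s) {I n : ℤ} (hd : d = I * s)
    (h : (n - 1) * s < d) : n * s ≤ d := by
  subst hd
  have : (n : ℝ) - 1 < I := lt_of_mul_lt_mul_right h hs.le
  have : n ≤ I := by
    have : n - 1 < I := by exact_mod_cast this
    omega
  gcongr

theorem pvObj_le_pvObj {a b r l d1 d2 L : ℝ} (ha : 0 ≤ a) (had : a ≤ d1) (hbd : b ≤ d2)
    (hr : 0 ≤ r) (hlL : l ≤ L) (hL : 0 ≤ L) : pvObj a b r l ≤ pvObj d1 d2 r L := by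
  have hcoef : 0 ≤ 0.6224 * a * r + 3.1661 * a ^ 2 := by positivity
  calc pvObj a b r l ≤ pvObj a b r L := by
        unfold pvObj; nlinarith [mul_nonneg hcoef (sub_nonneg.2 hlL)]
    _ ≤ pvObj d1 d2 r L := by unfold pvObj; gcongr

theorem pvObj_pvMinLength_eq (a b p r : ℝ) (hr : r ≠ 0) :
    pvObj a b r (pvMinLength p r) =
      1296000 / p * (0.6224 * a * r⁻¹ + 3.1661 * a ^ 2 * r⁻¹ ^ 2) +
        ((1.7781 * b - 4 / 3 * 0.6224 * a) * r ^ 2 + (19.84 - 4 / 3 * 3.1661) * a ^ 2 * r) := by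
  unfold pvObj pvMinLength
  field_simp
  ring

/- The `π`-term decreases at rate at least `(1296000/π)·0.6224·0.8125/R*² > 90`, while the
polynomial part increases at rate below `20` on `(0, R*]`. -/
theorem antitoneOn_pvObj_pvMinLength :
    AntitoneOn (fun r ↦ pvObj 0.8125 0.4375 r (pvMinLength π r))
      (Set.Ioc 0 (0.8125 / 0.0193)) := by
  rintro r ⟨hr0, -⟩ s ⟨hs0, hsρ⟩ hrs
  simp only
  rw [pvObj_pvMinLength_eq _ _ _ _ hr0.ne', pvObj_pvMinLength_eq _ _ _ _ hs0.ne']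
  have hK : 324000 ≤ 1296000 / π := by
    rw [le_div_iff₀ pi_pos]; nlinarith [pi_lt_d2]
  have hinv : s⁻¹ ≤ r⁻¹ := inv_anti₀ hr0 hrs
  have hgap : (s - r) * (0.8125 / 0.0193)⁻¹ ^ 2 ≤ r⁻¹ - s⁻¹ := by
    have hρs : (0.8125 / 0.0193)⁻¹ ≤ s⁻¹ := inv_anti₀ hs0 hsρ
    have : r⁻¹ - s⁻¹ = (s - r) * (r⁻¹ * s⁻¹) := by field_simp
    rw [this]
    refine mul_le_mul_of_nonneg_left ?_ (sub_nonneg.2 hrs)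
    rw [sq]
    exact mul_le_mul (hρs.trans hinv) hρs (by positivity) (by positivity)
  have hsq : s⁻¹ ^ 2 ≤ r⁻¹ ^ 2 := by gcongr
  nlinarith [mul_le_mul_of_nonneg_left hgap (by positivity : (0 : ℝ) ≤ 1296000 / π * 0.6224 * 0.8125),
    mul_le_mul_of_nonneg_left hsq (by positivity : (0 : ℝ) ≤ 1296000 / π * 3.1661 * 0.8125 ^ 2),
    mul_le_mul_of_nonneg_left hK (sub_nonneg.2 hrs)]

theorem pvObj_xstar_le_6060 :
    pvObj 0.8125 0.4375 (0.8125 / 0.0193) (pvMinLength π (0.8125 / 0.0193)) ≤ 6060 := by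
  calc _ ≤ pvObj 0.8125 0.4375 (0.8125 / 0.0193) (pvMinLength 3.1415 (0.8125 / 0.0193)) :=
        pvObj_le_pvObj (by norm_num) le_rfl le_rfl (by norm_num)
          (pvMinLength_anti (by norm_num) pi_gt_d4.le (by norm_num)) (by norm_num [pvMinLength])
    _ ≤ 6060 := by norm_num [pvObj, pvMinLength]

theorem pvObj_ge_6060_of_step {m : ℤ} (hm14 : 14 ≤ m) (hm19 : m ≤ 19) {r : ℝ}
    (hlo : (m : ℝ) - 1 ≤ 0.3088 * r) (hhi : 0.3088 * r ≤ m) :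
    6060 ≤ pvObj (m * 0.0625) (0.00954 * r) r (pvMinLength 3.1416 r) := by
  have hr : 0 < r := by
    have : (14 : ℝ) ≤ m := by exact_mod_cast hm14
    linarith
  have hexp : r ^ 2 * pvObj (m * 0.0625) (0.00954 * r) r (pvMinLength 3.1416 r) =
      1296000 / 3.1416 * (0.6224 * (m * 0.0625) * r + 3.1661 * (m * 0.0625) ^ 2) +
        ((1.7781 * (0.00954 * r) - 4 / 3 * 0.6224 * (m * 0.0625)) * r ^ 4
          + (19.84 - 4 / 3 * 3.1661) * (m * 0.0625) ^ 2 * r ^ 3) := by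
    unfold pvObj pvMinLength
    field_simp
    ring
  suffices h : 6060 * r ^ 2 ≤ r ^ 2 * pvObj (m * 0.0625) (0.00954 * r) r (pvMinLength 3.1416 r)
    from le_of_mul_le_mul_left (by linarith) (pow_pos hr 2)
  rw [hexp]
  interval_cases m <;> push_cast at hlo hhi ⊢ <;>
  · have p1 : 0 ≤ 0.3088 * r - _ := sub_nonneg.2 hlo
    have q1 := sub_nonneg.2 hhi
    have p2 := mul_nonneg p1 p1
    have p3 := mul_nonneg p2 p1
    have p4 := mul_nonneg p2 p2
    nlinarith [mul_nonneg q1 p1, mul_nonneg q1 p2, mul_nonneg q1 p3, mul_nonneg q1 p4]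

theorem pvObj_ge_6060_of_large_radius {r : ℝ} (hr : 19 ≤ 0.3088 * r) :
    6060 ≤ pvObj (0.0193 * r) (0.00954 * r) r 10 := by
  unfold pvObj
  nlinarith [mul_nonneg (mul_nonneg (sub_nonneg.2 hr) (sub_nonneg.2 hr)) (sub_nonneg.2 hr),
    mul_nonneg (sub_nonneg.2 hr) (sub_nonneg.2 hr)]

section Feasible

variable {d1 d2 r L : ℝ}

theorem pvFeasible.forty_lt (h : pvFeasible d1 d2 r L) : 40 < r :=
  forty_lt_of_volume (by linarith [h.2.1]) h.2.2.2.2.1 h.2.2.2.2.2.2.2.1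

theorem pvFeasible.pvMinLength_le (h : pvFeasible d1 d2 r L) : pvMinLength π r ≤ L :=
  pvMinLength_le_of_volume (by linarith [h.2.1]) h.2.2.2.2.2.2.2.1

theorem pvFeasible.seven_sixteenths_le (h : pvFeasible d1 d2 r L) : 7 * 0.0625 ≤ d2 := by
  have hr := h.forty_lt
  obtain ⟨⟨-, J, -, -, -, -, -, hd2J⟩, -, -, -, -, -, hd2, -⟩ := h
  exact_mod_cast mul_le_of_sub_one_mul_lt (n := 7) (by norm_num) hd2J (by linarith)

theorem pvFeasible.pvObj_xstar_le (h : pvFeasible d1 d2 r L) (hr : r ≤ 0.8125 / 0.0193) :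
    pvObj 0.8125 0.4375 (0.8125 / 0.0193) (pvMinLength π (0.8125 / 0.0193)) ≤
      pvObj d1 d2 r L := by
  have hr40 := h.forty_lt
  have hd2 := h.seven_sixteenths_le
  have hL := h.pvMinLength_le
  obtain ⟨⟨I, -, -, -, -, -, hd1I, -⟩, -, -, hL10, -, hd1, -⟩ := h
  have hd1' : 13 * 0.0625 ≤ d1 := by
    exact_mod_cast mul_le_of_sub_one_mul_lt (n := 13) (by norm_num) hd1I (by linarith)
  calc _ ≤ pvObj 0.8125 0.4375 r (pvMinLength π r) :=
        antitoneOn_pvObj_pvMinLength ⟨by linarith, hr⟩ ⟨by norm_num, le_rfl⟩ hr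
    _ ≤ pvObj d1 d2 r L :=
        pvObj_le_pvObj (by norm_num) (by linarith) (by linarith) (by linarith) hL (by linarith)

theorem pvFeasible.pvObj_ge_6060 (h : pvFeasible d1 d2 r L) (hr : 0.8125 / 0.0193 < r) :
    6060 ≤ pvObj d1 d2 r L := by
  have hr0 : 0 ≤ r := by linarith [h.forty_lt]
  have hL := h.pvMinLength_le
  obtain ⟨⟨I, -, -, -, -, -, hd1I, -⟩, -, -, hL10, -, hd1, hd2, -⟩ := h
  obtain ⟨m, hm_lo, hm_hi⟩ : ∃ m : ℤ, (m : ℝ) - 1 < 0.3088 * r ∧ 0.3088 * r ≤ m :=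
    ⟨_, by linarith [Int.ceil_lt_add_one (0.3088 * r)], Int.le_ceil _⟩
  have hd1' : m * 0.0625 ≤ d1 := mul_le_of_sub_one_mul_lt (by norm_num) hd1I (by linarith)
  have hm14 : 14 ≤ m := by
    have : (13 : ℝ) < m := by rw [div_lt_iff₀ (by norm_num)] at hr; linarith
    have : 13 < m := by exact_mod_cast this
    omega
  rcases le_or_gt m 19 with hm19 | hm20
  · calc 6060 ≤ pvObj (m * 0.0625) (0.00954 * r) r (pvMinLength 3.1416 r) :=
          pvObj_ge_6060_of_step hm14 hm19 hm_lo.le hm_hi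
      _ ≤ pvObj d1 d2 r L := pvObj_le_pvObj (by positivity) hd1' hd2 hr0
          ((pvMinLength_anti pi_pos pi_lt_d4.le (by linarith)).trans hL) (by linarith)
  · have hm : (20 : ℝ) ≤ m := by exact_mod_cast hm20
    calc 6060 ≤ pvObj (0.0193 * r) (0.00954 * r) r 10 := pvObj_ge_6060_of_large_radius (by linarith)
      _ ≤ pvObj d1 d2 r L := pvObj_le_pvObj (by positivity) hd1 hd2 hr0 hL10 (by linarith)

end Feasible

/-- x* = (0.8125, 0.4375, R*, L*) is a global minimizer of the pressure
vessel design problem. -/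
theorem pv_xstar_global_min :
    let Rs : ℝ := 0.8125 / 0.0193
    let Ls : ℝ := 1296000 / (Real.pi * Rs ^ 2) - (4 / 3) * Rs
    ∀ d1 d2 r L : ℝ, pvFeasible d1 d2 r L →
      pvObj d1 d2 r L ≥ pvObj 0.8125 0.4375 Rs Ls := by
  intro Rs Ls d1 d2 r L h
  rcases le_or_gt r Rs with hr | hr
  · exact h.pvObj_xstar_le hr
  · exact pvObj_xstar_le_6060.trans (h.pvObj_ge_6060 hr)
end

section
/- Let R* = 0.8125/0.0193 and L* = 1296000/(π·R*²) − (4/3)·R*. Then 6059.714335048 < f(0.8125, 0.4375, R*, L*) < 6059.714335049; i.e., the global minimum value of the pressure vessel design problem is 6059.714335048436 to twelve decimal places. -/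
/-!
`L*` is chosen so that the volume constraint `π r² L + (4/3) π r³ = 1296000` is active; on that
surface the objective at `r = R*` is `c / π + d` with explicit rationals `c, d > 0`.
The twenty-digit enclosure of `π` in Mathlib then pins `c / π` down far beyond twelve decimals.
-/

open Real

theorem pvObj_volume_active (d1 d2 r V : ℝ) (hr : r ≠ 0) :
    pvObj d1 d2 r (V / (π * r ^ 2) - 4 / 3 * r) =
      (0.6224 * d1 * r + 3.1661 * d1 ^ 2) * V / (π * r ^ 2)
        + (1.7781 * d2 - 0.6224 * (4 / 3) * d1) * r ^ 2
        + (19.84 - 3.1661 * (4 / 3)) * d1 ^ 2 * r := by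
  unfold pvObj
  field_simp
  ring

theorem div_pi_mem_Ioo {c : ℝ} (hc : 0 < c) :
    c / π ∈ Set.Ioo (c / 3.14159265358979323847) (c / 3.14159265358979323846) :=
  ⟨div_lt_div_of_pos_left hc pi_pos pi_lt_d20,
    div_lt_div_of_pos_left hc (by norm_num) pi_gt_d20⟩

/-- The global minimum value of the pressure vessel design problem is
6059.714335048436 to twelve decimal places. -/
theorem pv_min_value_bounds :
    let Rs : ℝ := 0.8125 / 0.0193
    let Ls : ℝ := 1296000 / (Real.pi * Rs ^ 2) - (4 / 3) * Rs
    6059.714335048 < pvObj 0.8125 0.4375 Rs Ls ∧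
    pvObj 0.8125 0.4375 Rs Ls < 6059.714335049 := by
  intro Rs Ls
  have hvalue :
      pvObj 0.8125 0.4375 Rs Ls = 1068524507709 / 62500000 / π + 70690038419 / 114428928 := by
    rw [pvObj_volume_active _ _ _ _ (by norm_num [Rs])]
    simp only [Rs]
    field_simp
    ring
  obtain ⟨hlo, hhi⟩ := div_pi_mem_Ioo (c := 1068524507709 / 62500000) (by norm_num)
  rw [hvalue]
  constructor <;> norm_num at hlo hhi ⊢ <;> linarith
end

section
/- For every feasible quadruple (d1, d2, r, L) of the pressure vessel design problem, d1 ≥ 0.8125 and d2 ≥ 0.4375. Equivalently, writing d1 = I·0.0625 and d2 = J·0.0625 with integers I, J, every feasible point has I ≥ 13 and J ≥ 7. -/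
/-!
The volume constraint together with `L ≤ 200` forces `r > 40`, since even a cylinder of
radius 40 and length 200 with two hemispherical caps has volume `405333⅓ π < 1296000`.
Hence `d1 ≥ 0.0193 r > 0.772 > 12 · 0.0625` and `d2 ≥ 0.00954 r > 0.3816 > 6 · 0.0625`,
and on the grid of multiples of `0.0625` this means `I ≥ 13` and `J ≥ 7`.
-/

open Real

/-- Volume of a cylinder of radius `r` and length `L` closed by two hemispherical caps. -/
noncomputable def vesselVolume (r L : ℝ) : ℝ :=
  π * r ^ 2 * L + (4 * π / 3) * r ^ 3

lemma vesselVolume_le_vesselVolume {r r' L L' : ℝ} (hr : 0 ≤ r) (hrr' : r ≤ r')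
    (hLL' : L ≤ L') (hL' : 0 ≤ L') : vesselVolume r L ≤ vesselVolume r' L' := by
  unfold vesselVolume
  have hsq : r ^ 2 ≤ r' ^ 2 := pow_le_pow_left₀ hr hrr' 2
  have hcyl : r ^ 2 * L ≤ r' ^ 2 * L' :=
    (mul_le_mul_of_nonneg_left hLL' (sq_nonneg r)).trans (mul_le_mul_of_nonneg_right hsq hL')
  simp only [mul_assoc π]
  exact add_le_add (by gcongr) (by gcongr)

lemma vesselVolume_forty_two_hundred_lt : vesselVolume 40 200 < 1296000 := by
  unfold vesselVolume
  nlinarith [pi_lt_d2]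

lemma forty_lt_of_le_vesselVolume {r L : ℝ} (hr : 0 ≤ r) (hL : L ≤ 200)
    (hvol : 1296000 ≤ vesselVolume r L) : 40 < r := by
  by_contra! hr40
  have := vesselVolume_le_vesselVolume hr hr40 hL (by norm_num)
  linarith [vesselVolume_forty_two_hundred_lt]

lemma le_of_lt_mul_sixteenth {I k : ℤ} (h : ((k : ℝ) - 1) * 0.0625 < I * 0.0625) : k ≤ I := by
  have : ((k - 1 : ℤ) : ℝ) < I := by push_cast; linarith
  exact Int.sub_one_lt_iff.mp (by exact_mod_cast this)

/-- For every feasible point of the pressure vessel design problem,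
d1 ≥ 0.8125 and d2 ≥ 0.4375; equivalently, the integer multipliers
satisfy I ≥ 13 and J ≥ 7. -/
theorem pv_thickness_lower_bounds (d1 d2 r L : ℝ) (h : pvFeasible d1 d2 r L) :
    d1 ≥ 0.8125 ∧ d2 ≥ 0.4375 ∧
    (∀ I J : ℤ, d1 = (I : ℝ) * 0.0625 → d2 = (J : ℝ) * 0.0625 →
      13 ≤ I ∧ 7 ≤ J) := by
  obtain ⟨⟨I, J, -, -, -, -, hI, hJ⟩, hr10, -, -, hL200, hd1, hd2, hvol, -⟩ := h
  have hr : 40 < r := forty_lt_of_le_vesselVolume (by linarith) hL200 hvol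
  have hmult : ∀ I J : ℤ, d1 = (I : ℝ) * 0.0625 → d2 = (J : ℝ) * 0.0625 →
      13 ≤ I ∧ 7 ≤ J := by
    intro I J hI hJ
    constructor <;> apply le_of_lt_mul_sixteenth <;> push_cast <;> linarith
  obtain ⟨hI13, hJ7⟩ := hmult I J hI hJ
  have hI13' : (13 : ℝ) ≤ I := by exact_mod_cast hI13
  have hJ7' : (7 : ℝ) ≤ J := by exact_mod_cast hJ7
  exact ⟨by linarith, by linarith, hmult⟩
end

section
/- Let R* = 0.8125/0.0193 and L* = 1296000/(π·R*²) − (4/3)·R*, and let g(r,L) = 0.5057·r·L + 0.77791875·r² + 2.090120703125·L + 13.0975·r. Then for all real r, L with 0 < r ≤ R*, 10 ≤ L ≤ 200, and π·r²·L + (4π/3)·r³ ≥ 1296000, we have g(r,L) ≥ g(R*, L*). -/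
/-!
Along the volume constraint `L` is determined by `r`, and the objective is increasing in `L`, so
it suffices to minimise `r ↦ g(r, L(r))`. This is a function `A / r + B / r² + C r + D r²` with
`A, B, D ≥ 0`; it is convex on `r > 0` and its derivative is still negative at `r = R*`, so it is
decreasing on `(0, R*]`.
-/

/-- The reduced pressure vessel objective with d1 = 0.8125 and d2 = 0.4375. -/
noncomputable def pvRed (r L : ℝ) : ℝ :=
  0.5057 * r * L + 0.77791875 * r ^ 2 + 2.090120703125 * L + 13.0975 * r

open Real

-- The cylinder length of a capsule of radius `r` (cylinder plus two hemispherical heads) of volume `V`.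
noncomputable def capsuleLength (V r : ℝ) : ℝ := V / (π * r ^ 2) - 4 / 3 * r

theorem capsuleLength_le {V r L : ℝ} (hr : 0 < r)
    (hV : V ≤ π * r ^ 2 * L + 4 * π / 3 * r ^ 3) : capsuleLength V r ≤ L := by
  have hvol : π * r ^ 2 * (L + 4 / 3 * r) = π * r ^ 2 * L + 4 * π / 3 * r ^ 3 := by ring
  rw [capsuleLength, sub_le_iff_le_add, div_le_iff₀ (by positivity)]
  linarith

noncomputable def recipQuad (A B C D r : ℝ) : ℝ := A / r + B / r ^ 2 + C * r + D * r ^ 2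

theorem recipQuad_le_of_le {A B C D r R : ℝ} (hA : 0 ≤ A) (hB : 0 ≤ B) (hD : 0 ≤ D)
    (hr : 0 < r) (hrR : r ≤ R) (hderiv : C + 2 * D * R ≤ A / R ^ 2 + 2 * B / R ^ 3) :
    recipQuad A B C D R ≤ recipQuad A B C D r := by
  have hR : 0 < R := hr.trans_le hrR
  have hdiff : recipQuad A B C D r - recipQuad A B C D R =
      (R - r) * (A / (r * R) + B * (r + R) / (r ^ 2 * R ^ 2) - C - D * (r + R)) := by
    unfold recipQuad
    field_simp
    ring
  have hAterm : A / R ^ 2 ≤ A / (r * R) :=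
    div_le_div_of_nonneg_left hA (by positivity) (by nlinarith)
  have hBterm : 2 * B / R ^ 3 ≤ B * (r + R) / (r ^ 2 * R ^ 2) := by
    rw [div_le_div_iff₀ (by positivity) (by positivity)]
    have : 2 * r ^ 2 ≤ (r + R) * R := by nlinarith
    have := mul_le_mul_of_nonneg_left this (mul_nonneg hB (pow_nonneg hR.le 2))
    nlinarith
  have hDterm : D * (r + R) ≤ 2 * D * R := by nlinarith
  have hbracket : 0 ≤ A / (r * R) + B * (r + R) / (r ^ 2 * R ^ 2) - C - D * (r + R) := by
    linarith
  linarith [mul_nonneg (sub_nonneg.2 hrR) hbracket]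

theorem pvRed_le_pvRed_of_le {r L L' : ℝ} (hr : 0 ≤ r) (hL : L ≤ L') :
    pvRed r L ≤ pvRed r L' := by
  unfold pvRed
  nlinarith [mul_nonneg hr (sub_nonneg.2 hL)]

theorem pvRed_capsuleLength (V : ℝ) {r : ℝ} (hr : r ≠ 0) :
    pvRed r (capsuleLength V r) =
      recipQuad (0.5057 * V / π) (2.090120703125 * V / π) (13.0975 - 2.090120703125 * 4 / 3)
        (0.77791875 - 0.5057 * 4 / 3) r := by
  unfold pvRed capsuleLength recipQuad
  field_simp
  ring

theorem pvRed_deriv_nonpos_at_stress_bound :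
    (13.0975 - 2.090120703125 * 4 / 3) + 2 * (0.77791875 - 0.5057 * 4 / 3) * (0.8125 / 0.0193)
      ≤ 0.5057 * 1296000 / π / (0.8125 / 0.0193) ^ 2
        + 2 * (2.090120703125 * 1296000 / π) / (0.8125 / 0.0193) ^ 3 := by
  -- The crude bound `π ≤ 4` suffices: the right side is about 140, the left about 19.
  have hA : 0.5057 * 1296000 / 4 / (0.8125 / 0.0193) ^ 2
      ≤ 0.5057 * 1296000 / π / (0.8125 / 0.0193) ^ 2 := by
    gcongr
    exact pi_le_four
  have hB : 0 ≤ 2 * (2.090120703125 * 1296000 / π) / (0.8125 / 0.0193 : ℝ) ^ 3 := by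
    positivity
  norm_num at hA hB ⊢
  linarith

/-- For the reduced pressure vessel problem, (R*, L*) minimizes the reduced
objective over the region 0 < r ≤ R*, 10 ≤ L ≤ 200 with the volume
constraint. -/
theorem pv_reduced_min :
    let Rs : ℝ := 0.8125 / 0.0193
    let Ls : ℝ := 1296000 / (Real.pi * Rs ^ 2) - (4 / 3) * Rs
    ∀ r L : ℝ, 0 < r → r ≤ Rs → 10 ≤ L → L ≤ 200 →
      Real.pi * r ^ 2 * L + (4 * Real.pi / 3) * r ^ 3 ≥ 1296000 →
      pvRed r L ≥ pvRed Rs Ls := by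
  intro Rs Ls r L hr hrR _ _ hvol
  calc pvRed Rs Ls = pvRed Rs (capsuleLength 1296000 Rs) := rfl
    _ = _ := pvRed_capsuleLength 1296000 (by norm_num)
    _ ≤ _ := recipQuad_le_of_le (by positivity) (by positivity) (by norm_num) hr hrR
        pvRed_deriv_nonpos_at_stress_bound
    _ = pvRed r (capsuleLength 1296000 r) := (pvRed_capsuleLength 1296000 hr.ne').symm
    _ ≤ pvRed r L := pvRed_le_pvRed_of_le hr.le (capsuleLength_le hr hvol)
end

section
/- Let r1 be the unique positive real root of 200·π·r² + (4π/3)·r³ = 1296000, let g(r,L) = 0.5057·r·L + 0.77791875·r² + 2.090120703125·L + 13.0975·r, let R* = 0.8125/0.0193 and L* = 1296000/(π·R*²) − (4/3)·R*. Then 6288.677045 < g(r1, 200) < 6288.677046; in particular g(r1, 200) > g(R*, L*), so the endpoint (r1, 200) of the volume-equality curve is not the global optimum. -/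
open Real Set

noncomputable def capsuleVolume (r L : ℝ) : ℝ :=
  π * r ^ 2 * L + 4 * π / 3 * r ^ 3

lemma capsuleVolume_strictMonoOn {L : ℝ} (hL : 0 ≤ L) :
    StrictMonoOn (capsuleVolume · L) (Ici 0) := by
  intro r hr s hs hrs
  have hr2 : r ^ 2 ≤ s ^ 2 := pow_le_pow_left₀ hr hrs.le 2
  have hr3 : r ^ 3 < s ^ 3 := pow_lt_pow_left₀ hrs hr (by norm_num)
  have hπ := pi_pos
  simp only [capsuleVolume]
  exact add_lt_add_of_le_of_lt (by gcongr) (by gcongr)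

lemma pvRed_strictMonoOn_left {L : ℝ} (hL : 0 ≤ L) : StrictMonoOn (pvRed · L) (Ici 0) := by
  intro r hr s hs hrs
  simp only [pvRed]
  linarith [mul_le_mul_of_nonneg_right hrs.le hL, pow_le_pow_left₀ hr hrs.le 2]

lemma pvRed_strictMono_right {r : ℝ} (hr : 0 ≤ r) : StrictMono (pvRed r) := by
  intro L M hLM
  simp only [pvRed]
  linarith [mul_le_mul_of_nonneg_left hLM.le hr]

lemma capsuleVolume_bounds :
    capsuleVolume 40.31961872409 200 < 1296000 ∧ 1296000 < capsuleVolume 40.3196187241 200 := by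
  have hlo := pi_gt_d20
  have hhi := pi_lt_d20
  constructor <;> simp only [capsuleVolume] <;> nlinarith

lemma mem_Ioo_of_capsuleVolume_eq {r : ℝ} (hr : 0 < r) (hV : capsuleVolume r 200 = 1296000) :
    r ∈ Ioo 40.31961872409 40.3196187241 := by
  have hmono := capsuleVolume_strictMonoOn (L := 200) (by norm_num)
  obtain ⟨hlo, hhi⟩ := capsuleVolume_bounds
  exact ⟨(hmono.lt_iff_lt (by norm_num) hr.le).1 (hV ▸ hlo),
    (hmono.lt_iff_lt hr.le (by norm_num)).1 (hV ▸ hhi)⟩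

lemma pvRed_root_bounds {r : ℝ} (hr : 0 < r) (hV : capsuleVolume r 200 = 1296000) :
    6288.677045 < pvRed r 200 ∧ pvRed r 200 < 6288.677046 := by
  obtain ⟨hlo, hhi⟩ := mem_Ioo_of_capsuleVolume_eq hr hV
  have hmono := pvRed_strictMonoOn_left (L := 200) (by norm_num)
  constructor
  · calc (6288.677045 : ℝ) < pvRed 40.31961872409 200 := by norm_num [pvRed]
      _ < pvRed r 200 := hmono (by norm_num) hr.le hlo
  · calc pvRed r 200 < pvRed 40.3196187241 200 := hmono hr.le (by norm_num) hhi
      _ < 6288.677046 := by norm_num [pvRed]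

lemma pvRed_Rstar_Lstar_lt :
    pvRed (0.8125 / 0.0193) (1296000 / (π * (0.8125 / 0.0193) ^ 2) - 4 / 3 * (0.8125 / 0.0193))
      < 6288.677045 := by
  set R : ℝ := 0.8125 / 0.0193
  have hL : 1296000 / (π * R ^ 2) - 4 / 3 * R < 1296000 / (3.14 * R ^ 2) - 4 / 3 * R := by
    gcongr
    exact pi_gt_d2
  calc pvRed R (1296000 / (π * R ^ 2) - 4 / 3 * R)
      < pvRed R (1296000 / (3.14 * R ^ 2) - 4 / 3 * R) := pvRed_strictMono_right (by positivity) hL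
    _ < 6288.677045 := by norm_num [R, pvRed]

/-- At the other endpoint (r1, 200) of the volume-equality curve, where r1 is
the unique positive root of 200·π·r² + (4π/3)·r³ = 1296000, the reduced
objective satisfies 6288.677045 < g(r1, 200) < 6288.677046; in particular
g(r1, 200) > g(R*, L*), so (r1, 200) is not the global optimum. -/
theorem pv_other_endpoint_value :
    let Rs : ℝ := 0.8125 / 0.0193
    let Ls : ℝ := 1296000 / (Real.pi * Rs ^ 2) - (4 / 3) * Rs
    ∀ r1 : ℝ, 0 < r1 →
      200 * Real.pi * r1 ^ 2 + (4 * Real.pi / 3) * r1 ^ 3 = 1296000 →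
      (6288.677045 < pvRed r1 200 ∧ pvRed r1 200 < 6288.677046) ∧
        pvRed r1 200 > pvRed Rs Ls := by
  intro Rs Ls r1 hr1 hV
  have hbounds := pvRed_root_bounds hr1 (by rw [← hV, capsuleVolume]; ring)
  exact ⟨hbounds, pvRed_Rstar_Lstar_lt.trans hbounds.1⟩
end

section
/- Let n ≥ 1 and let a1, …, an be positive real numbers. For all positive reals x1, …, xn with Σ_{i=1}^n a_i/x_i³ ≤ 1, it holds that Σ_{i=1}^n x_i ≥ (Σ_{i=1}^n a_i^{1/4})^{4/3}. -/
/-! Weighted Hölder with weights `x i` and `f i = (a i / x i ^ 4) ^ (1/4)` gives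
`∑ a i ^ (1/4) ≤ (∑ x i) ^ (3/4) * (∑ a i / x i ^ 3) ^ (1/4)`, and the constraint bounds the
last factor by `1`. -/

open Finset Real

variable {ι : Type*}

theorem sum_rpow_inv_le_weight_mul (s : Finset ι) {p : ℝ} (hp : 1 ≤ p) {a x : ι → ℝ}
    (ha : ∀ i, 0 ≤ a i) (hx : ∀ i, 0 < x i) :
    ∑ i ∈ s, a i ^ p⁻¹ ≤
      (∑ i ∈ s, x i) ^ (1 - p⁻¹) * (∑ i ∈ s, a i / x i ^ (p - 1)) ^ p⁻¹ := by
  have holder := inner_le_weight_mul_Lp_of_nonneg s hp x (fun i ↦ (a i / x i ^ p) ^ p⁻¹)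
    (fun i ↦ (hx i).le) (fun i ↦ by have := ha i; have := hx i; positivity)
  have hp0 : p ≠ 0 := by positivity
  have weight_mul_f (i : ι) : x i * (a i / x i ^ p) ^ p⁻¹ = a i ^ p⁻¹ := by
    have := hx i
    rw [div_rpow (ha i) (by positivity), rpow_rpow_inv this.le hp0, mul_div_cancel₀ _ this.ne']
  have weight_mul_f_pow (i : ι) : x i * ((a i / x i ^ p) ^ p⁻¹) ^ p = a i / x i ^ (p - 1) := by
    have := hx i
    rw [rpow_inv_rpow (by have := ha i; positivity) hp0, rpow_sub_one this.ne']
    field_simp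
  simpa only [weight_mul_f, weight_mul_f_pow] using holder

theorem sum_rpow_inv_rpow_le_sum_of_sum_div_le_one (s : Finset ι) {p : ℝ} (hp : 1 < p)
    {a x : ι → ℝ} (ha : ∀ i, 0 ≤ a i) (hx : ∀ i, 0 < x i)
    (hcon : ∑ i ∈ s, a i / x i ^ (p - 1) ≤ 1) :
    (∑ i ∈ s, a i ^ p⁻¹) ^ (1 - p⁻¹)⁻¹ ≤ ∑ i ∈ s, x i := by
  have hr : 0 < 1 - p⁻¹ := sub_pos.2 (inv_lt_one_of_one_lt₀ hp)
  have hX : 0 ≤ ∑ i ∈ s, x i := sum_nonneg fun i _ ↦ (hx i).le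
  rw [rpow_inv_le_iff_of_pos (sum_nonneg fun i _ ↦ rpow_nonneg (ha i) _) hX hr]
  calc ∑ i ∈ s, a i ^ p⁻¹
      ≤ (∑ i ∈ s, x i) ^ (1 - p⁻¹) * (∑ i ∈ s, a i / x i ^ (p - 1)) ^ p⁻¹ :=
        sum_rpow_inv_le_weight_mul s hp.le ha hx
    _ ≤ (∑ i ∈ s, x i) ^ (1 - p⁻¹) * 1 := by
        gcongr
        exact rpow_le_one (sum_nonneg fun i _ ↦ div_nonneg (ha i) (rpow_nonneg (hx i).le _))
          hcon (by positivity)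
    _ = (∑ i ∈ s, x i) ^ (1 - p⁻¹) := mul_one _

theorem cantilever_key_inequality_general (n : ℕ)
    (a x : Fin n → ℝ) (ha : ∀ i, 0 < a i) (hx : ∀ i, 0 < x i)
    (hcon : ∑ i, a i / (x i) ^ 3 ≤ 1) :
    ∑ i, x i ≥ (∑ i, (a i) ^ ((1 : ℝ) / 4)) ^ ((4 : ℝ) / 3) := by
  have hcon' : ∑ i, a i / x i ^ ((4 : ℝ) - 1) ≤ 1 := by
    simpa [show (4 : ℝ) - 1 = (3 : ℕ) by norm_num, rpow_natCast] using hcon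
  convert sum_rpow_inv_rpow_le_sum_of_sum_div_le_one univ (by norm_num) (fun i ↦ (ha i).le) hx
    hcon' using 3 <;> norm_num

/-- The key inequality of the cantilever beam benchmark: for positive weights
a i and positive x i with Σ a i / (x i)³ ≤ 1, one has
Σ x i ≥ (Σ (a i)^(1/4))^(4/3). -/
theorem cantilever_key_inequality (n : ℕ) (hn : 1 ≤ n)
    (a x : Fin n → ℝ) (ha : ∀ i, 0 < a i) (hx : ∀ i, 0 < x i)
    (hcon : ∑ i, a i / (x i) ^ 3 ≤ 1) :
    ∑ i, x i ≥ (∑ i, (a i) ^ ((1 : ℝ) / 4)) ^ ((4 : ℝ) / 3) :=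
  cantilever_key_inequality_general n a x ha hx hcon
end

section
/- Let n ≥ 1, let a1, …, an be positive reals, set S = Σ_{i=1}^n a_i^{1/4}, and define x_i* = a_i^{1/4}·S^{1/3} for each i. Then x_i* > 0, Σ_{i=1}^n a_i/(x_i*)³ = 1, and Σ_{i=1}^n x_i* = S^{4/3}. Moreover, any positive x1, …, xn with Σ a_i/x_i³ ≤ 1 and Σ x_i = S^{4/3} must satisfy x_i = x_i* for all i; i.e., x* is the unique minimizer of Σ x_i subject to Σ a_i/x_i³ ≤ 1. -/
/-!
Put `b i = a i ^ (1/4)`, so `S = ∑ b i`, and `c = S ^ (1/3)`. For `x > 0` the four-term AM–GM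
inequality `x + x + x + u⁴/x³ ≥ 4u` holds with equality only at `x = u`. Taking `u = c · b i` and
summing gives `4cS ≤ 3 ∑ x i + c⁴ ∑ a i / x i³`, and the right-hand side is at most
`4 S^(4/3) = 4cS` under the constraints. So every termwise inequality is an equality, which forces
`x i = c · b i = x* i`.
-/

open Finset

lemma three_mul_add_pow_four_div_sub_four_mul {x : ℝ} (hx : x ≠ 0) (u : ℝ) :
    3 * x + u ^ 4 / x ^ 3 - 4 * u = (x - u) ^ 2 * (2 * x ^ 2 + (x + u) ^ 2) / x ^ 3 := by
  field_simp
  ring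

lemma four_mul_le_three_mul_add_pow_four_div {x : ℝ} (hx : 0 < x) (u : ℝ) :
    4 * u ≤ 3 * x + u ^ 4 / x ^ 3 := by
  rw [← sub_nonneg, three_mul_add_pow_four_div_sub_four_mul hx.ne']
  positivity

lemma eq_of_three_mul_add_pow_four_div_eq {x u : ℝ} (hx : 0 < x)
    (h : 3 * x + u ^ 4 / x ^ 3 = 4 * u) : x = u := by
  have hzero : (x - u) ^ 2 * (2 * x ^ 2 + (x + u) ^ 2) / x ^ 3 = 0 := by
    rw [← three_mul_add_pow_four_div_sub_four_mul hx.ne', h, sub_self]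
  have hfactor : 0 < 2 * x ^ 2 + (x + u) ^ 2 := by positivity
  simpa [hx.ne', hfactor.ne', sub_eq_zero] using hzero

lemma four_mul_mul_sum_le {ι : Type*} (s : Finset ι) {x : ι → ℝ} (hx : ∀ i ∈ s, 0 < x i)
    (b : ι → ℝ) (c : ℝ) :
    4 * c * ∑ i ∈ s, b i ≤ 3 * ∑ i ∈ s, x i + c ^ 4 * ∑ i ∈ s, b i ^ 4 / x i ^ 3 := by
  simp only [mul_sum, ← sum_add_distrib]
  refine sum_le_sum fun i hi => ?_
  have h := four_mul_le_three_mul_add_pow_four_div (hx i hi) (c * b i)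
  rw [mul_pow, mul_div_assoc] at h
  linarith

lemma eq_mul_of_sum_le_four_mul_mul_sum {ι : Type*} (s : Finset ι) {x : ι → ℝ}
    (hx : ∀ i ∈ s, 0 < x i) {b : ι → ℝ} {c : ℝ}
    (h : 3 * ∑ i ∈ s, x i + c ^ 4 * ∑ i ∈ s, b i ^ 4 / x i ^ 3 ≤ 4 * c * ∑ i ∈ s, b i) :
    ∀ i ∈ s, x i = c * b i := by
  have hterm : ∀ i ∈ s, 4 * (c * b i) ≤ 3 * x i + (c * b i) ^ 4 / x i ^ 3 :=
    fun i hi => four_mul_le_three_mul_add_pow_four_div (hx i hi) _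
  have hsum : ∑ i ∈ s, 4 * (c * b i) = ∑ i ∈ s, (3 * x i + (c * b i) ^ 4 / x i ^ 3) := by
    have hle := four_mul_mul_sum_le s hx b c
    simp only [mul_pow, mul_div_assoc, sum_add_distrib, ← mul_sum, ← mul_assoc] at hle h ⊢
    linarith
  intro i hi
  exact eq_of_three_mul_add_pow_four_div_eq (hx i hi)
    ((sum_eq_sum_iff_of_le hterm).mp hsum i hi).symm

/-- The optimizer of the cantilever beam key inequality: with
S = Σ (a i)^(1/4) and x* i = (a i)^(1/4)·S^(1/3), the point x* is positive,
satisfies the constraint with equality, attains the value S^(4/3), and is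
the unique minimizer of Σ x i subject to Σ a i / (x i)³ ≤ 1. -/
theorem cantilever_unique_minimizer (n : ℕ) (hn : 1 ≤ n)
    (a : Fin n → ℝ) (ha : ∀ i, 0 < a i) :
    let S : ℝ := ∑ i, (a i) ^ ((1 : ℝ) / 4)
    let xstar : Fin n → ℝ := fun i => (a i) ^ ((1 : ℝ) / 4) * S ^ ((1 : ℝ) / 3)
    (∀ i, 0 < xstar i) ∧
    (∑ i, a i / (xstar i) ^ 3 = 1) ∧
    (∑ i, xstar i = S ^ ((4 : ℝ) / 3)) ∧
    (∀ x : Fin n → ℝ, (∀ i, 0 < x i) → ∑ i, a i / (x i) ^ 3 ≤ 1 →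
      ∑ i, x i = S ^ ((4 : ℝ) / 3) → ∀ i, x i = xstar i) := by
  intro S xstar
  set b : Fin n → ℝ := fun i => a i ^ ((1 : ℝ) / 4)
  have hb : ∀ i, 0 < b i := fun i => Real.rpow_pos_of_pos (ha i) _
  have hb4 : ∀ i, b i ^ 4 = a i := fun i => by
    rw [← Real.rpow_mul_natCast (ha i).le]; norm_num
  have hS : 0 < S := sum_pos (fun i _ => hb i) ⟨⟨0, hn⟩, mem_univ _⟩
  set c := S ^ ((1 : ℝ) / 3)
  have hc : 0 < c := Real.rpow_pos_of_pos hS _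
  have hc3 : c ^ 3 = S := by rw [← Real.rpow_mul_natCast hS.le]; norm_num
  have hc4 : c ^ 4 = S ^ ((4 : ℝ) / 3) := by rw [← Real.rpow_mul_natCast hS.le]; norm_num
  have hxstar : ∀ i, xstar i = b i * c := fun _ => rfl
  refine ⟨fun i => mul_pos (hb i) hc, ?_, ?_, fun x hx hconstr hvalue i => ?_⟩
  · have hterm : ∀ i, a i / xstar i ^ 3 = b i / S := fun i => by
      rw [hxstar, ← hb4 i, ← hc3]
      field_simp [(hb i).ne']
    rw [sum_congr rfl fun i _ => hterm i, ← sum_div, div_self hS.ne']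
  · calc ∑ i, xstar i = c ^ 3 * c := by rw [← sum_mul, hc3]
      _ = S ^ ((4 : ℝ) / 3) := by rw [← hc4]; ring
  · have hle : 3 * ∑ i, x i + c ^ 4 * ∑ i, b i ^ 4 / x i ^ 3 ≤ 4 * c * ∑ i, b i := by
      simp only [hb4, hvalue, ← hc4]
      have hscaled := mul_le_mul_of_nonneg_left hconstr (pow_pos hc 4).le
      rw [show 4 * c * S = 4 * c ^ 4 by rw [← hc3]; ring]
      linarith
    rw [eq_mul_of_sum_le_four_mul_mul_sum univ (fun i _ => hx i) hle i (mem_univ i)]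
    exact mul_comm _ _
end

section
/- Let S = 61^{1/4} + 37^{1/4} + 19^{1/4} + 7^{1/4} + 1. For every feasible point (x1,…,x5) of the cantilever beam design problem, 0.0624·(x1+x2+x3+x4+x5) ≥ 0.0624·S^{4/3}, and this value is attained: the point x_i* = a_i^{1/4}·S^{1/3} (with (a1,…,a5) = (61,37,19,7,1)) satisfies 0.01 ≤ x_i* ≤ 100 for all i, satisfies the constraint with equality, and has objective value exactly 0.0624·S^{4/3}. Hence 0.0624·S^{4/3} is the global minimum of the cantilever beam design problem. -/
/-!
Write `S = ∑ aᵢ^(1/4)` and `c = S^(1/3)`. Four-term AM-GM gives, for every `t > 0`, the tangent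
bound `4 c aᵢ^(1/4) ≤ 3 t + c⁴ aᵢ / t³`, with equality at `t = aᵢ^(1/4) c`. Summing it over a
feasible `x` and using `∑ aᵢ / xᵢ³ ≤ 1`, `c³ = S` yields `4 c S ≤ 3 ∑ xᵢ + c S`, i.e.
`∑ xᵢ ≥ c S = S^(4/3)`; the equality point `xᵢ* = aᵢ^(1/4) c` attains it and is active.
-/

/-- The weights of the cantilever beam design problem. -/
def cbA : Fin 5 → ℝ := ![61, 37, 19, 7, 1]

/-- Feasibility for the cantilever beam design problem. -/
def cbFeasible (x : Fin 5 → ℝ) : Prop :=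
  (∀ i, 0.01 ≤ x i ∧ x i ≤ 100) ∧ (∑ i, cbA i / (x i) ^ 3) - 1 ≤ 0

open Finset

lemma four_mul_mul_pow_three_le (u t : ℝ) : 4 * u * t ^ 3 ≤ 3 * t ^ 4 + u ^ 4 := by
  nlinarith [mul_nonneg (sq_nonneg (t - u))
    (add_nonneg (mul_nonneg zero_le_two (sq_nonneg t)) (sq_nonneg (t + u)))]

lemma rpow_one_div_three_pow_three {x : ℝ} (hx : 0 ≤ x) : (x ^ ((1 : ℝ) / 3)) ^ 3 = x := by
  simpa using Real.rpow_inv_natCast_pow hx three_ne_zero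

lemma rpow_one_div_four_pow_four {x : ℝ} (hx : 0 ≤ x) : (x ^ ((1 : ℝ) / 4)) ^ 4 = x := by
  simpa using Real.rpow_inv_natCast_pow hx four_ne_zero

lemma rpow_four_div_three_eq_mul {x : ℝ} (hx : 0 ≤ x) :
    x ^ ((4 : ℝ) / 3) = x * x ^ ((1 : ℝ) / 3) := by
  rw [show (4 : ℝ) / 3 = 1 + 1 / 3 by norm_num, Real.rpow_add' hx (by norm_num), Real.rpow_one]

lemma rpow_one_div_mem_Icc {x b : ℝ} {n : ℕ} (hn : n ≠ 0) (hb : 0 ≤ b)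
    (hx : x ∈ Set.Icc 1 (b ^ n)) :
    x ^ (1 / n : ℝ) ∈ Set.Icc 1 b := by
  have hn' : (0 : ℝ) < n := by positivity
  refine ⟨Real.one_le_rpow hx.1 (by positivity), ?_⟩
  rw [one_div, Real.rpow_inv_le_iff_of_pos (by linarith [hx.1]) hb hn', Real.rpow_natCast]
  exact hx.2

lemma four_mul_mul_rpow_one_div_four_le {a t : ℝ} (ha : 0 ≤ a) (ht : 0 < t) (c : ℝ) :
    4 * c * a ^ ((1 : ℝ) / 4) ≤ 3 * t + c ^ 4 * (a / t ^ 3) := by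
  have hpoly := four_mul_mul_pow_three_le (c * a ^ ((1 : ℝ) / 4)) t
  rw [mul_pow, rpow_one_div_four_pow_four ha] at hpoly
  rw [← sub_nonneg]
  have key : 3 * t + c ^ 4 * (a / t ^ 3) - 4 * c * a ^ ((1 : ℝ) / 4)
      = (3 * t ^ 4 + c ^ 4 * a - 4 * (c * a ^ ((1 : ℝ) / 4)) * t ^ 3) / t ^ 3 := by
    field_simp
  rw [key]
  exact div_nonneg (by linarith) (by positivity)

section

variable {ι : Type*} [Fintype ι] {a : ι → ℝ}

theorem sum_rpow_one_div_four_rpow_le_sum (ha : ∀ i, 0 ≤ a i) {x : ι → ℝ} (hx : ∀ i, 0 < x i)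
    (h : ∑ i, a i / x i ^ 3 ≤ 1) :
    (∑ i, a i ^ ((1 : ℝ) / 4)) ^ ((4 : ℝ) / 3) ≤ ∑ i, x i := by
  set S := ∑ i, a i ^ ((1 : ℝ) / 4)
  have hS : 0 ≤ S := sum_nonneg fun i _ => Real.rpow_nonneg (ha i) _
  set c := S ^ ((1 : ℝ) / 3)
  have hc3 : c ^ 3 = S := rpow_one_div_three_pow_three hS
  have hsum : 4 * c * S ≤ 3 * ∑ i, x i + c ^ 4 * ∑ i, a i / x i ^ 3 := by
    simp only [S, mul_sum, ← sum_add_distrib]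
    exact sum_le_sum fun i _ => four_mul_mul_rpow_one_div_four_le (ha i) (hx i) c
  have hconstr : c ^ 4 * ∑ i, a i / x i ^ 3 ≤ c * S := by
    calc c ^ 4 * ∑ i, a i / x i ^ 3 ≤ c ^ 4 * 1 := by gcongr
      _ = c * S := by rw [← hc3]; ring
  rw [rpow_four_div_three_eq_mul hS]
  linarith

theorem sum_div_rpow_one_div_four_mul_pow_three_eq_one (ha : ∀ i, 0 ≤ a i)
    (hS : 0 < ∑ i, a i ^ ((1 : ℝ) / 4)) :
    ∑ i, a i / (a i ^ ((1 : ℝ) / 4) * (∑ j, a j ^ ((1 : ℝ) / 4)) ^ ((1 : ℝ) / 3)) ^ 3 = 1 := by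
  set S := ∑ i, a i ^ ((1 : ℝ) / 4)
  have hterm : ∀ i,
      a i / (a i ^ ((1 : ℝ) / 4) * S ^ ((1 : ℝ) / 3)) ^ 3 = a i ^ ((1 : ℝ) / 4) / S := by
    intro i
    rw [mul_pow, rpow_one_div_three_pow_three hS.le]
    nth_rw 1 [← rpow_one_div_four_pow_four (ha i)]
    rcases (Real.rpow_nonneg (ha i) ((1 : ℝ) / 4)).eq_or_lt with hy | hy
    · rw [← hy]; simp
    · field_simp
  rw [sum_congr rfl fun i _ => hterm i, ← sum_div, div_self hS.ne']

theorem sum_rpow_one_div_four_mul_eq_rpow (ha : ∀ i, 0 ≤ a i) :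
    ∑ i, a i ^ ((1 : ℝ) / 4) * (∑ j, a j ^ ((1 : ℝ) / 4)) ^ ((1 : ℝ) / 3)
      = (∑ i, a i ^ ((1 : ℝ) / 4)) ^ ((4 : ℝ) / 3) := by
  rw [← sum_mul, rpow_four_div_three_eq_mul (sum_nonneg fun i _ => Real.rpow_nonneg (ha i) _)]

end

/-- With S = 61^(1/4) + 37^(1/4) + 19^(1/4) + 7^(1/4) + 1, every feasible point
of the cantilever beam problem has objective value at least 0.0624·S^(4/3),
and this value is attained at x* i = (a i)^(1/4)·S^(1/3), which is feasible
and satisfies the constraint with equality: 0.0624·S^(4/3) is the global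
minimum of the cantilever beam design problem. -/
theorem cantilever_global_min :
    let S : ℝ := (61 : ℝ) ^ ((1 : ℝ) / 4) + (37 : ℝ) ^ ((1 : ℝ) / 4) +
      (19 : ℝ) ^ ((1 : ℝ) / 4) + (7 : ℝ) ^ ((1 : ℝ) / 4) + 1
    let xstar : Fin 5 → ℝ := fun i => (cbA i) ^ ((1 : ℝ) / 4) * S ^ ((1 : ℝ) / 3)
    (∀ x : Fin 5 → ℝ, cbFeasible x →
      0.0624 * (∑ i, x i) ≥ 0.0624 * S ^ ((4 : ℝ) / 3)) ∧
    (∀ i, 0.01 ≤ xstar i ∧ xstar i ≤ 100) ∧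
    (∑ i, cbA i / (xstar i) ^ 3) - 1 = 0 ∧
    0.0624 * (∑ i, xstar i) = 0.0624 * S ^ ((4 : ℝ) / 3) := by
  intro S xstar
  have hS : ∑ i, cbA i ^ ((1 : ℝ) / 4) = S := by simp [Fin.sum_univ_five, cbA, S]
  have hA : ∀ i, cbA i ∈ Set.Icc 1 (3 ^ 4) := by intro i; fin_cases i <;> norm_num [cbA]
  have hA0 : ∀ i, 0 ≤ cbA i := fun i => zero_le_one.trans (hA i).1
  have hroot : ∀ i, cbA i ^ ((1 : ℝ) / 4) ∈ Set.Icc 1 3 := fun i => by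
    simpa using rpow_one_div_mem_Icc four_ne_zero zero_le_three (hA i)
  have hS_ge : ∑ _ : Fin 5, (1 : ℝ) ≤ S := hS ▸ sum_le_sum fun i _ => (hroot i).1
  have hS_le : S ≤ ∑ _ : Fin 5, (3 : ℝ) := hS ▸ sum_le_sum fun i _ => (hroot i).2
  norm_num at hS_ge hS_le
  have hcbrt : S ^ ((1 : ℝ) / 3) ∈ Set.Icc 1 3 := by
    simpa using rpow_one_div_mem_Icc three_ne_zero zero_le_three (x := S)
      ⟨by linarith, by linarith⟩
  refine ⟨fun x ⟨hbox, hx⟩ => ?_, fun i => ?_, ?_, ?_⟩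
  · have hmin := sum_rpow_one_div_four_rpow_le_sum hA0
      (fun i => lt_of_lt_of_le (by norm_num) (hbox i).1) (by linarith)
    rw [hS] at hmin
    linarith
  · obtain ⟨hroot_ge, hroot_le⟩ := hroot i
    obtain ⟨hcbrt_ge, hcbrt_le⟩ := hcbrt
    constructor <;> simp only [xstar] <;> nlinarith
  · have hval := sum_div_rpow_one_div_four_mul_pow_three_eq_one hA0 (by linarith)
    rw [hS] at hval
    exact sub_eq_zero.mpr hval
  · have hval := sum_rpow_one_div_four_mul_eq_rpow hA0
    rw [hS] at hval
    exact congrArg _ hval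
end

section
/- Let S = 61^{1/4} + 37^{1/4} + 19^{1/4} + 7^{1/4} + 1. Then 1.3399563 < 0.0624·S^{4/3} < 1.3399565; i.e., the global minimum value of the cantilever beam design problem is 1.3399564 to seven significant digits (the paper reports 1.339956367). -/
/-!
Each fourth root is trapped between decimals with eight places by comparing fourth powers,
which pins S down to within 4·10⁻⁸. Since 0.0624·S^(4/3) > c iff (c/0.0624)³ < S⁴, both
bounds then reduce to exact rational comparisons.
-/

namespace Real

theorem lt_rpow_div_iff {x y p q : ℝ} (hx : 0 ≤ x) (hy : 0 ≤ y) (hq : 0 < q) :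
    x < y ^ (p / q) ↔ x ^ q < y ^ p := by
  rw [div_eq_mul_inv, rpow_mul hy, lt_rpow_inv_iff_of_pos hx (rpow_nonneg hy p) hq]

theorem rpow_div_lt_iff {x y p q : ℝ} (hx : 0 ≤ x) (hy : 0 ≤ y) (hq : 0 < q) :
    y ^ (p / q) < x ↔ y ^ p < x ^ q := by
  rw [div_eq_mul_inv, rpow_mul hy, rpow_inv_lt_iff_of_pos (rpow_nonneg hy p) hx hq]

theorem rpow_one_div_mem_Ioo {a b x q : ℝ} (ha : 0 ≤ a) (hb : 0 ≤ b) (hx : 0 ≤ x)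
    (hq : 0 < q) (hax : a ^ q < x) (hxb : x < b ^ q) : x ^ (1 / q) ∈ Set.Ioo a b :=
  ⟨by rwa [lt_rpow_div_iff ha hx hq, rpow_one], by rwa [rpow_div_lt_iff hb hx hq, rpow_one]⟩

end Real

open Real

/-- Numerical bounds for the global minimum value 0.0624·S^(4/3) of the
cantilever beam design problem, where
S = 61^(1/4) + 37^(1/4) + 19^(1/4) + 7^(1/4) + 1. -/
theorem cantilever_min_value_bounds :
    let S : ℝ := (61 : ℝ) ^ ((1 : ℝ) / 4) + (37 : ℝ) ^ ((1 : ℝ) / 4) +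
      (19 : ℝ) ^ ((1 : ℝ) / 4) + (7 : ℝ) ^ ((1 : ℝ) / 4) + 1
    1.3399563 < 0.0624 * S ^ ((4 : ℝ) / 3) ∧
      0.0624 * S ^ ((4 : ℝ) / 3) < 1.3399565 := by
  intro S
  have h61 : (61 : ℝ) ^ ((1 : ℝ) / 4) ∈ Set.Ioo 2.79468239 2.79468240 :=
    rpow_one_div_mem_Ioo (by norm_num) (by norm_num) (by norm_num) (by norm_num)
      (by norm_num) (by norm_num)
  have h37 : (37 : ℝ) ^ ((1 : ℝ) / 4) ∈ Set.Ioo 2.46632571 2.46632572 :=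
    rpow_one_div_mem_Ioo (by norm_num) (by norm_num) (by norm_num) (by norm_num)
      (by norm_num) (by norm_num)
  have h19 : (19 : ℝ) ^ ((1 : ℝ) / 4) ∈ Set.Ioo 2.08779762 2.08779763 :=
    rpow_one_div_mem_Ioo (by norm_num) (by norm_num) (by norm_num) (by norm_num)
      (by norm_num) (by norm_num)
  have h7 : (7 : ℝ) ^ ((1 : ℝ) / 4) ∈ Set.Ioo 1.62657656 1.62657657 :=
    rpow_one_div_mem_Ioo (by norm_num) (by norm_num) (by norm_num) (by norm_num)
      (by norm_num) (by norm_num)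
  have hS : S ∈ Set.Ioo 9.97538228 9.97538232 := by
    constructor <;> linarith [h61.1, h61.2, h37.1, h37.2, h19.1, h19.2, h7.1, h7.2]
  have hS₀ : 0 ≤ S := by linarith [hS.1]
  constructor
  · rw [← div_lt_iff₀' (by norm_num), lt_rpow_div_iff (by norm_num) hS₀ (by norm_num)]
    calc (1.3399563 / 0.0624 : ℝ) ^ (3 : ℝ) < 9.97538228 ^ (4 : ℝ) := by norm_num
      _ < S ^ (4 : ℝ) := rpow_lt_rpow (by norm_num) hS.1 (by norm_num)
  · rw [← lt_div_iff₀' (by norm_num), rpow_div_lt_iff (by norm_num) hS₀ (by norm_num)]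
    calc S ^ (4 : ℝ) < 9.97538232 ^ (4 : ℝ) := rpow_lt_rpow hS₀ hS.2 (by norm_num)
      _ < (1.3399565 / 0.0624 : ℝ) ^ (3 : ℝ) := by norm_num
end
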